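/- arXiv:1901.05889 — 2 statements merged into one kernel-verified Lean document; each statement's English description precedes it below -/
import Mathlib

section
/- For $|q|<1$ and complex $a$ with $aq^n \neq 1$ for all $n \geq 1$: $\sum_{n=1}^{\infty} \frac{a q^n}{1-a q^n} = \sum_{n=1}^{\infty} \frac{(1-aq^{2n}) q^{n^2} a^n}{(1-aq^n)(1-q^n)}$. -/
/-!
Formally `a q^n / (1 - a q^n) = ∑_{m ≥ 1} a^m q^{nm}`, and grouping the double sum over
`n, m ≥ 1` by `k = min n m` turns the `k`-th "hook" into
`a^k q^{k²} (1 / (1 - a q^k) + q^k / (1 - q^k))`, which is the `k`-th term on the right.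
Since `|a q^n| < 1` may fail for small `n`, the regrouping is done on finite sums instead:
the first `N` hooks exceed the first `N` Lambert terms exactly by the pairs with `m ≤ N < n`.
Summed over `n` first, this excess has a closed form that satisfies the comparison as a rational
identity for every `a`, and it tends to `0` with `N`.
-/

open Finset Filter Topology

theorem sum_range_pow_succ_mul_one_sub {R : Type*} [CommRing R] (x : R) (N : ℕ) :
    (∑ m ∈ range N, x ^ (m + 1)) * (1 - x) = x - x ^ (N + 1) := by
  simp_rw [pow_succ', ← mul_sum, mul_assoc, geom_sum_mul_neg]
  ring

theorem summable_pow_succ_of_tendsto_zero {u : ℕ → ℝ} (hu0 : ∀ n, 0 ≤ u n)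
    (hu : Tendsto u atTop (𝓝 0)) : Summable fun n => u n ^ (n + 1) := by
  refine Summable.of_norm_bounded_eventually_nat
    ((summable_nat_add_iff 1).2 summable_geometric_two) ?_
  filter_upwards [hu.eventually_le_const one_half_pos] with n hn
  rw [Real.norm_of_nonneg (pow_nonneg (hu0 n) _)]
  exact pow_le_pow_left₀ (hu0 n) hn _

section

variable {K : Type*} [Field K]

def lambertTerm (a q : K) (n : ℕ) : K :=
  a * q ^ (n + 1) / (1 - a * q ^ (n + 1))

def hookTerm (a q : K) (n : ℕ) : K :=
  (1 - a * q ^ (2 * (n + 1))) * q ^ ((n + 1) ^ 2) * a ^ (n + 1)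
    / ((1 - a * q ^ (n + 1)) * (1 - q ^ (n + 1)))

/-- Formally `∑_{m ≤ N < n} a^m q^{nm}`, summed over `n` first. -/
def lambertTail (a q : K) (N : ℕ) : K :=
  ∑ m ∈ range N, (a * q ^ (N + 1)) ^ (m + 1) / (1 - q ^ (m + 1))

theorem hook_sub_lambert {x y : K} (hx : x ≠ 1) (hy : y ≠ 1) (N : ℕ) :
    (1 - x * y) * x ^ (N + 1) / ((1 - x) * (1 - y)) - x / (1 - x)
      = x ^ (N + 1) * y / (1 - y) - ∑ m ∈ range N, x ^ (m + 1) := by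
  have hx' : 1 - x ≠ 0 := sub_ne_zero.2 hx.symm
  have hy' : 1 - y ≠ 0 := sub_ne_zero.2 hy.symm
  have hgeom : ∑ m ∈ range N, x ^ (m + 1) = (x - x ^ (N + 1)) / (1 - x) := by
    rw [eq_div_iff hx', sum_range_pow_succ_mul_one_sub]
  rw [hgeom]
  field_simp
  ring

theorem lambertTail_succ_sub {a q : K} (hq : ∀ n, 1 ≤ n → q ^ n ≠ 1) (N : ℕ) :
    lambertTail a q (N + 1) - lambertTail a q N
      = (a * q ^ (N + 1)) ^ (N + 1) * q ^ (N + 1) / (1 - q ^ (N + 1))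
        - ∑ m ∈ range N, (a * q ^ (N + 1)) ^ (m + 1) := by
  have hshift (m : ℕ) :
      (a * q ^ (N + 1 + 1)) ^ (m + 1) = (a * q ^ (N + 1)) ^ (m + 1) * q ^ (m + 1) := by
    ring
  have hterm (m : ℕ) : (a * q ^ (N + 1 + 1)) ^ (m + 1) / (1 - q ^ (m + 1))
      = (a * q ^ (N + 1)) ^ (m + 1) / (1 - q ^ (m + 1)) - (a * q ^ (N + 1)) ^ (m + 1) := by
    have : 1 - q ^ (m + 1) ≠ 0 := sub_ne_zero.2 (hq (m + 1) m.succ_pos).symm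
    rw [hshift]
    field_simp
    ring
  rw [lambertTail, lambertTail, sum_range_succ, hshift]
  simp_rw [hterm, sum_sub_distrib]
  ring

theorem hookTerm_eq (a q : K) (n : ℕ) :
    hookTerm a q n = (1 - a * q ^ (n + 1) * q ^ (n + 1)) * (a * q ^ (n + 1)) ^ (n + 1)
      / ((1 - a * q ^ (n + 1)) * (1 - q ^ (n + 1))) := by
  rw [hookTerm, two_mul, pow_add, sq, pow_mul, mul_pow]
  ring

theorem hookTerm_sub_lambertTerm {a q : K} (hq : ∀ n, 1 ≤ n → q ^ n ≠ 1)
    (ha : ∀ n, 1 ≤ n → a * q ^ n ≠ 1) (N : ℕ) :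
    hookTerm a q N - lambertTerm a q N = lambertTail a q (N + 1) - lambertTail a q N := by
  rw [hookTerm_eq, lambertTerm, lambertTail_succ_sub hq,
    hook_sub_lambert (ha _ N.succ_pos) (hq _ N.succ_pos)]

theorem sum_range_hookTerm_sub_lambertTerm {a q : K} (hq : ∀ n, 1 ≤ n → q ^ n ≠ 1)
    (ha : ∀ n, 1 ≤ n → a * q ^ n ≠ 1) (N : ℕ) :
    ∑ n ∈ range N, (hookTerm a q n - lambertTerm a q n) = lambertTail a q N := by
  simp_rw [hookTerm_sub_lambertTerm hq ha, sum_range_sub, lambertTail, range_zero, sum_empty,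
    sub_zero]

end

section

variable {K : Type*} [NormedField K]

theorem one_sub_norm_le_norm_one_sub_pow {q : K} (hq : ‖q‖ ≤ 1) {n : ℕ} (hn : n ≠ 0) :
    1 - ‖q‖ ≤ ‖1 - q ^ n‖ := by
  calc 1 - ‖q‖ ≤ 1 - ‖q‖ ^ n := by gcongr; exact pow_le_of_le_one (norm_nonneg q) hq hn
    _ = ‖(1 : K)‖ - ‖q ^ n‖ := by rw [norm_one, norm_pow]
    _ ≤ ‖1 - q ^ n‖ := norm_sub_norm_le _ _

theorem pow_ne_one_of_norm_lt_one {q : K} (hq : ‖q‖ < 1) {n : ℕ} (hn : n ≠ 0) :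
    q ^ n ≠ 1 := by
  intro h
  have := one_sub_norm_le_norm_one_sub_pow hq.le hn
  rw [h, sub_self, norm_zero] at this
  linarith

theorem norm_inv_one_sub_pow_le {q : K} (hq : ‖q‖ < 1) {n : ℕ} (hn : n ≠ 0) :
    ‖(1 - q ^ n)⁻¹‖ ≤ (1 - ‖q‖)⁻¹ := by
  rw [norm_inv]
  exact inv_anti₀ (sub_pos.2 hq) (one_sub_norm_le_norm_one_sub_pow hq.le hn)

theorem tendsto_mul_pow_succ_nhds_zero (a : K) {q : K} (hq : ‖q‖ < 1) :
    Tendsto (fun n => a * q ^ (n + 1)) atTop (𝓝 0) := by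
  simpa using ((tendsto_add_atTop_iff_nat 1).2
    (tendsto_pow_atTop_nhds_zero_of_norm_lt_one hq)).const_mul a

theorem norm_sum_pow_succ_mul_le {x : K} (hx : ‖x‖ ≤ 1 / 2) {c : ℕ → K} {C : ℝ}
    (hc : ∀ m, ‖c m‖ ≤ C) (N : ℕ) :
    ‖∑ m ∈ range N, x ^ (m + 1) * c m‖ ≤ 2 * C * ‖x‖ := by
  have hC : 0 ≤ C := (norm_nonneg _).trans (hc 0)
  calc ‖∑ m ∈ range N, x ^ (m + 1) * c m‖
      ≤ ∑ m ∈ range N, ‖x‖ * C * (1 / 2) ^ m := by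
        refine norm_sum_le_of_le _ fun m _ => ?_
        rw [norm_mul, norm_pow, pow_succ', mul_right_comm]
        gcongr
        exact hc m
    _ = ‖x‖ * C * ∑ m ∈ range N, (1 / 2 : ℝ) ^ m := by rw [mul_sum]
    _ ≤ ‖x‖ * C * 2 := by gcongr; exact sum_geometric_two_le N
    _ = 2 * C * ‖x‖ := by ring

theorem tendsto_lambertTail (a : K) {q : K} (hq : ‖q‖ < 1) :
    Tendsto (lambertTail a q) atTop (𝓝 0) := by
  have hx := tendsto_zero_iff_norm_tendsto_zero.1 (tendsto_mul_pow_succ_nhds_zero a hq)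
  refine squeeze_zero_norm' (a := fun N => 2 * (1 - ‖q‖)⁻¹ * ‖a * q ^ (N + 1)‖) ?_
    (by simpa using hx.const_mul (2 * (1 - ‖q‖)⁻¹))
  filter_upwards [hx.eventually_le_const one_half_pos] with N hN
  simp_rw [lambertTail, div_eq_mul_inv]
  exact norm_sum_pow_succ_mul_le hN (fun m => norm_inv_one_sub_pow_le hq m.add_one_ne_zero) N

variable [CompleteSpace K]

theorem summable_lambertTerm (a : K) {q : K} (hq : ‖q‖ < 1) : Summable (lambertTerm a q) := by
  have hx := tendsto_mul_pow_succ_nhds_zero a hq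
  have hnorm : Summable fun n => ‖a * q ^ (n + 1)‖ := by
    simpa [norm_mul, norm_pow, pow_succ, mul_assoc] using
      ((summable_geometric_of_lt_one (norm_nonneg q) hq).mul_right ‖q‖).mul_left ‖a‖
  have hinv : Tendsto (fun n => (1 - a * q ^ (n + 1))⁻¹) cofinite (𝓝 1) := by
    rw [Nat.cofinite_eq_atTop]
    simpa using (tendsto_const_nhds.sub hx).inv₀ (by simp : (1 : K) - 0 ≠ 0)
  exact (hnorm.mul_tendsto_const hinv).congr fun n => (div_eq_mul_inv _ _).symm

theorem summable_hookTerm (a : K) {q : K} (hq : ‖q‖ < 1) : Summable (hookTerm a q) := by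
  have hx := tendsto_mul_pow_succ_nhds_zero a hq
  have hy := tendsto_mul_pow_succ_nhds_zero 1 hq
  simp only [one_mul] at hy
  have hnorm : Summable fun n => ‖(a * q ^ (n + 1)) ^ (n + 1)‖ := by
    simpa only [norm_pow] using summable_pow_succ_of_tendsto_zero (fun n => norm_nonneg _)
      (tendsto_zero_iff_norm_tendsto_zero.1 hx)
  have hfactor : Tendsto (fun n => (1 - a * q ^ (n + 1) * q ^ (n + 1))
      * ((1 - a * q ^ (n + 1)) * (1 - q ^ (n + 1)))⁻¹) cofinite (𝓝 1) := by
    rw [Nat.cofinite_eq_atTop]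
    simpa using (tendsto_const_nhds.sub (hx.mul hy)).mul
      (((tendsto_const_nhds.sub hx).mul (tendsto_const_nhds.sub hy)).inv₀
        (by simp : (1 - 0) * (1 - 0) ≠ (0 : K)))
  refine (hnorm.mul_tendsto_const hfactor).congr fun n => ?_
  rw [hookTerm_eq, div_eq_mul_inv]
  ring

end

theorem stmt_9 (a q : ℂ) (hq : ‖q‖ < 1)
    (ha : ∀ n : ℕ, 1 ≤ n → a * q ^ n ≠ 1) :
    ∑' n : ℕ, a * q ^ (n + 1) / (1 - a * q ^ (n + 1))
      = ∑' n : ℕ, (1 - a * q ^ (2 * (n + 1))) * q ^ ((n + 1) ^ 2) * a ^ (n + 1)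
          / ((1 - a * q ^ (n + 1)) * (1 - q ^ (n + 1))) := by
  have hq1 (n : ℕ) (hn : 1 ≤ n) : q ^ n ≠ 1 := pow_ne_one_of_norm_lt_one hq (by omega)
  have hdiff := (summable_hookTerm a hq).hasSum.sub (summable_lambertTerm a hq).hasSum
  have hpartial := hdiff.tendsto_sum_nat
  simp_rw [sum_range_hookTerm_sub_lambertTerm hq1 ha] at hpartial
  exact (sub_eq_zero.1 (tendsto_nhds_unique hpartial (tendsto_lambertTail a hq))).symm
end

section
/- For $|q|<1$ and complex $a$ with $aq^n \neq 1$ for all $n \geq 1$: $\sum_{n=1}^{\infty} \frac{a q^n}{1-aq^n} = \frac{-1}{(aq;q)_\infty} \sum_{n=1}^{\infty} \frac{n(-a)^n q^{n(n+1)/2}}{(q;q)_n}$, where $(aq;q)_\infty = \prod_{j=1}^{\infty}(1-aq^j)$ and $(q;q)_n = \prod_{j=1}^{n}(1-q^j)$. -/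
/-!
Write `cₙ = (-1)ⁿ q^(n(n+1)/2) / (q;q)ₙ`, `S b = ∑ cₙ bⁿ`, `T b = ∑ n cₙ bⁿ = b S'(b)` and `L b`
for the Lambert series. The recursion `cₙ₊₁ (1 - qⁿ⁺¹) = -qⁿ⁺¹ cₙ` gives `S b = (1 - bq) S (bq)`
and `T b = (1 - bq) T (bq) - bq S (bq)`, while `L b = bq / (1 - bq) + L (bq)`. Hence `F = S` and
`F = L S + T` both satisfy `F b = (1 - bq) F (bq)`, so `F a = ∏_{j<N} (1 - aqʲ⁺¹) F (aqᴺ)`.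
As `N → ∞`, `S (aqᴺ) → 1` and `T (aqᴺ) → 0` by dominated convergence (the `cₙ` decay like
`q^(n²/2)`), and `L (aqᴺ)` is a tail of `L a`. This gives Euler's identity `S a = (aq;q)_∞` and
`L a (aq;q)_∞ + T a = 0`.
-/

open Filter Finset Topology

theorem eq_tprod_mul_of_eq_mul_succ {M : Type*} [CommMonoid M] [TopologicalSpace M]
    [ContinuousMul M] [T2Space M] {f u : ℕ → M} {c : M} (hfu : ∀ N, f N = u N * f (N + 1))
    (hu : Multipliable u) (hf : Tendsto f atTop (𝓝 c)) : f 0 = (∏' n, u n) * c := by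
  have hprod : ∀ N, f 0 = (∏ n ∈ range N, u n) * f N := by
    intro N
    induction N with
    | zero => simp
    | succ N ih => rw [ih, hfu N, prod_range_succ, mul_assoc]
  refine tendsto_nhds_unique (f := fun _ : ℕ => f 0) (l := atTop) tendsto_const_nhds ?_
  exact (hu.hasProd.tendsto_prod_nat.mul hf).congr fun N => (hprod N).symm

theorem tsum_sub_tsum_eq_tsum_succ_sub {G : Type*} [AddCommGroup G] [TopologicalSpace G]
    [IsTopologicalAddGroup G] [T2Space G] {f g : ℕ → G} (hf : Summable f) (hg : Summable g)
    (h0 : f 0 = g 0) : ∑' n, f n - ∑' n, g n = ∑' n, (f (n + 1) - g (n + 1)) := by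
  rw [← hf.tsum_sub hg, (hf.sub hg).tsum_eq_zero_add, h0, sub_self, zero_add]

section QSeries

variable {𝕜 : Type*} [NormedField 𝕜] {q : 𝕜}

theorem one_sub_norm_le_norm_one_sub_pow_succ (hq : ‖q‖ < 1) (n : ℕ) :
    1 - ‖q‖ ≤ ‖1 - q ^ (n + 1)‖ :=
  calc 1 - ‖q‖ ≤ 1 - ‖q‖ ^ (n + 1) := by
        gcongr; exact pow_le_of_le_one (norm_nonneg q) hq.le n.succ_ne_zero
    _ = ‖(1 : 𝕜)‖ - ‖q ^ (n + 1)‖ := by rw [norm_one, norm_pow]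
    _ ≤ ‖1 - q ^ (n + 1)‖ := norm_sub_norm_le _ _

theorem one_sub_pow_succ_ne_zero (hq : ‖q‖ < 1) (n : ℕ) : 1 - q ^ (n + 1) ≠ 0 :=
  norm_pos_iff.1 <| (sub_pos.2 hq).trans_le (one_sub_norm_le_norm_one_sub_pow_succ hq n)

theorem summable_norm_mul_pow_succ (hq : ‖q‖ < 1) (b : 𝕜) :
    Summable fun n => ‖b * q ^ (n + 1)‖ :=
  ((summable_geometric_of_lt_one (norm_nonneg q) hq).mul_left (‖b‖ * ‖q‖)).congr fun n => by
    rw [norm_mul, norm_pow, pow_succ]; ring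

def eulerCoeff (q : 𝕜) (n : ℕ) : 𝕜 :=
  (-1) ^ n * q ^ (n * (n + 1) / 2) / ∏ j ∈ range n, (1 - q ^ (j + 1))

theorem eulerCoeff_zero : eulerCoeff q 0 = 1 := by simp [eulerCoeff]

theorem eulerCoeff_succ_mul (hq : ‖q‖ < 1) (n : ℕ) :
    eulerCoeff q (n + 1) * (1 - q ^ (n + 1)) = -q ^ (n + 1) * eulerCoeff q n := by
  have hexp : (n + 1) * (n + 1 + 1) / 2 = n * (n + 1) / 2 + (n + 1) := by
    rw [show (n + 1) * (n + 1 + 1) = n * (n + 1) + 2 * (n + 1) by ring,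
      Nat.add_mul_div_left _ _ two_pos]
  have hprod : ∏ j ∈ range n, (1 - q ^ (j + 1)) ≠ 0 :=
    prod_ne_zero_iff.2 fun j _ => one_sub_pow_succ_ne_zero hq j
  rw [eulerCoeff, eulerCoeff, hexp, prod_range_succ, pow_add, pow_succ (-1 : 𝕜)]
  field_simp [one_sub_pow_succ_ne_zero hq n]
  ring

theorem norm_eulerCoeff_succ_le (hq : ‖q‖ < 1) (n : ℕ) :
    ‖eulerCoeff q (n + 1)‖ ≤ ‖q‖ ^ (n + 1) / (1 - ‖q‖) * ‖eulerCoeff q n‖ := by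
  rw [div_mul_eq_mul_div, le_div_iff₀ (sub_pos.2 hq)]
  calc ‖eulerCoeff q (n + 1)‖ * (1 - ‖q‖)
      ≤ ‖eulerCoeff q (n + 1)‖ * ‖1 - q ^ (n + 1)‖ := by
        gcongr; exact one_sub_norm_le_norm_one_sub_pow_succ hq n
    _ = ‖q‖ ^ (n + 1) * ‖eulerCoeff q n‖ := by
        rw [← norm_mul, eulerCoeff_succ_mul hq, norm_mul, norm_neg, norm_pow]

theorem summable_norm_eulerCoeff_mul_pow (hq : ‖q‖ < 1) (r : ℝ) :
    Summable fun n => ‖eulerCoeff q n‖ * r ^ n := by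
  have hratio : Tendsto (fun n : ℕ => |r| * (‖q‖ ^ (n + 1) / (1 - ‖q‖))) atTop (𝓝 0) := by
    simpa using (((tendsto_pow_atTop_nhds_zero_of_lt_one (norm_nonneg q) hq).comp
      (tendsto_add_atTop_nat 1)).div_const (1 - ‖q‖)).const_mul |r|
  refine summable_of_ratio_norm_eventually_le (r := 1 / 2) (by norm_num) ?_
  filter_upwards [hratio.eventually_le_const (by norm_num : (0 : ℝ) < 1 / 2)] with n hn
  simp only [norm_mul, norm_pow, Real.norm_eq_abs, abs_norm]
  calc ‖eulerCoeff q (n + 1)‖ * |r| ^ (n + 1)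
      ≤ ‖q‖ ^ (n + 1) / (1 - ‖q‖) * ‖eulerCoeff q n‖ * |r| ^ (n + 1) := by
        gcongr; exact norm_eulerCoeff_succ_le hq n
    _ = |r| * (‖q‖ ^ (n + 1) / (1 - ‖q‖)) * (‖eulerCoeff q n‖ * |r| ^ n) := by ring
    _ ≤ 1 / 2 * (‖eulerCoeff q n‖ * |r| ^ n) := by gcongr

theorem summable_norm_natCast_mul_eulerCoeff_mul_pow (hq : ‖q‖ < 1) {r : ℝ} (hr : 0 ≤ r) :
    Summable fun n : ℕ => ‖(n : 𝕜) * eulerCoeff q n‖ * r ^ n := by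
  refine (summable_norm_eulerCoeff_mul_pow hq (2 * r)).of_nonneg_of_le (fun n => by positivity)
    fun n => ?_
  calc ‖(n : 𝕜) * eulerCoeff q n‖ * r ^ n ≤ n * ‖eulerCoeff q n‖ * r ^ n := by
        rw [norm_mul]; gcongr; simpa using Nat.norm_cast_le (α := 𝕜) n
    _ ≤ 2 ^ n * ‖eulerCoeff q n‖ * r ^ n := by
        gcongr; exact_mod_cast Nat.lt_two_pow_self.le
    _ = ‖eulerCoeff q n‖ * (2 * r) ^ n := by ring

noncomputable def eulerSeries (q b : 𝕜) : 𝕜 := ∑' n, eulerCoeff q n * b ^ n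

/-- `b • S'(b)` for `S = eulerSeries q`. -/
noncomputable def eulerSeriesTheta (q b : 𝕜) : 𝕜 := ∑' n : ℕ, (n : 𝕜) * eulerCoeff q n * b ^ n

noncomputable def lambertSeries (q b : 𝕜) : 𝕜 := ∑' n, b * q ^ (n + 1) / (1 - b * q ^ (n + 1))

theorem tendsto_lambertSeries_mul_pow (a : 𝕜) :
    Tendsto (fun N => lambertSeries q (a * q ^ N)) atTop (𝓝 0) :=
  (tendsto_sum_nat_add fun n => a * q ^ (n + 1) / (1 - a * q ^ (n + 1))).congr fun N =>
    tsum_congr fun n => by ring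

variable [CompleteSpace 𝕜]

theorem tendsto_tsum_mul_pow_mul_pow (hq : ‖q‖ < 1) {a : 𝕜} {c : ℕ → 𝕜}
    (hc : Summable fun n => ‖c n‖ * ‖a‖ ^ n) :
    Tendsto (fun N => ∑' n, c n * (a * q ^ N) ^ n) atTop (𝓝 (c 0)) := by
  have hlim : ∑' n, c n * (0 : 𝕜) ^ n = c 0 := by
    rw [tsum_eq_single 0 fun n hn => by simp [hn]]
    simp
  have horbit : Tendsto (fun N => a * q ^ N) atTop (𝓝 0) := by
    simpa using (tendsto_pow_atTop_nhds_zero_of_norm_lt_one hq).const_mul a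
  rw [← hlim]
  refine tendsto_tsum_of_dominated_convergence hc (fun n => (horbit.pow n).const_mul (c n))
    (Eventually.of_forall fun N n => ?_)
  rw [norm_mul, norm_pow, norm_mul, norm_pow]
  gcongr
  exact mul_le_of_le_one_right (norm_nonneg a) (pow_le_one₀ (norm_nonneg q) hq.le)

theorem multipliable_one_sub_mul_pow_succ (hq : ‖q‖ < 1) (a : 𝕜) :
    Multipliable fun n => 1 - a * q ^ (n + 1) := by
  simpa [sub_eq_add_neg] using
    multipliable_one_add_of_summable (f := fun n => -(a * q ^ (n + 1)))
    (by simpa using summable_norm_mul_pow_succ hq a)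

theorem tprod_one_sub_mul_pow_succ_ne_zero (hq : ‖q‖ < 1) {a : 𝕜}
    (ha : ∀ n, a * q ^ (n + 1) ≠ 1) : ∏' n, (1 - a * q ^ (n + 1)) ≠ 0 := by
  simpa [sub_eq_add_neg] using tprod_one_add_ne_zero_of_summable
    (f := fun n => -(a * q ^ (n + 1)))
    (fun n => by simpa [← sub_eq_add_neg, sub_eq_zero] using (ha n).symm)
    (by simpa using summable_norm_mul_pow_succ hq a)

theorem summable_eulerCoeff_mul_pow (hq : ‖q‖ < 1) (b : 𝕜) :
    Summable fun n => eulerCoeff q n * b ^ n :=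
  (summable_norm_eulerCoeff_mul_pow hq ‖b‖).of_norm_bounded fun n => by rw [norm_mul, norm_pow]

theorem summable_natCast_mul_eulerCoeff_mul_pow (hq : ‖q‖ < 1) (b : 𝕜) :
    Summable fun n : ℕ => (n : 𝕜) * eulerCoeff q n * b ^ n :=
  (summable_norm_natCast_mul_eulerCoeff_mul_pow hq (norm_nonneg b)).of_norm_bounded fun n => by
    rw [norm_mul _ (b ^ n), norm_pow]

theorem summable_lambertSeries_term (hq : ‖q‖ < 1) (b : 𝕜) :
    Summable fun n => b * q ^ (n + 1) / (1 - b * q ^ (n + 1)) := by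
  have hgeo := summable_norm_mul_pow_succ hq b
  refine Summable.of_norm_bounded_eventually_nat (hgeo.mul_left 2) ?_
  filter_upwards [hgeo.tendsto_atTop_zero.eventually_le_const (by norm_num : (0 : ℝ) < 1 / 2)]
    with n hn
  have hd : 1 / 2 ≤ ‖1 - b * q ^ (n + 1)‖ := by
    linarith [norm_sub_norm_le (1 : 𝕜) (b * q ^ (n + 1)), norm_one (α := 𝕜)]
  rw [norm_div, div_le_iff₀ (by linarith)]
  nlinarith [norm_nonneg (b * q ^ (n + 1))]

theorem eulerSeries_eq_one_sub_mul (hq : ‖q‖ < 1) (b : 𝕜) :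
    eulerSeries q b = (1 - b * q) * eulerSeries q (b * q) := by
  have h := tsum_sub_tsum_eq_tsum_succ_sub (summable_eulerCoeff_mul_pow hq b)
    (summable_eulerCoeff_mul_pow hq (b * q)) (by simp)
  have hterm : ∀ n, eulerCoeff q (n + 1) * b ^ (n + 1) - eulerCoeff q (n + 1) * (b * q) ^ (n + 1)
      = -(b * q) * (eulerCoeff q n * (b * q) ^ n) := fun n => by
    linear_combination b ^ (n + 1) * eulerCoeff_succ_mul hq n
  rw [tsum_congr hterm, tsum_mul_left] at h
  rw [eulerSeries, eulerSeries]
  linear_combination h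

theorem eulerSeriesTheta_eq_one_sub_mul_sub (hq : ‖q‖ < 1) (b : 𝕜) :
    eulerSeriesTheta q b
      = (1 - b * q) * eulerSeriesTheta q (b * q) - b * q * eulerSeries q (b * q) := by
  have h := tsum_sub_tsum_eq_tsum_succ_sub (summable_natCast_mul_eulerCoeff_mul_pow hq b)
    (summable_natCast_mul_eulerCoeff_mul_pow hq (b * q)) (by simp)
  have hterm : ∀ n : ℕ, ((n + 1 : ℕ) : 𝕜) * eulerCoeff q (n + 1) * b ^ (n + 1)
        - ((n + 1 : ℕ) : 𝕜) * eulerCoeff q (n + 1) * (b * q) ^ (n + 1)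
      = -(b * q) * ((n : 𝕜) * eulerCoeff q n * (b * q) ^ n + eulerCoeff q n * (b * q) ^ n) :=
    fun n => by
      push_cast
      linear_combination ((n : 𝕜) + 1) * b ^ (n + 1) * eulerCoeff_succ_mul hq n
  rw [tsum_congr hterm, tsum_mul_left, (summable_natCast_mul_eulerCoeff_mul_pow hq _).tsum_add
    (summable_eulerCoeff_mul_pow hq _)] at h
  rw [eulerSeriesTheta, eulerSeriesTheta, eulerSeries]
  linear_combination h

theorem lambertSeries_eq_div_add (hq : ‖q‖ < 1) (b : 𝕜) :
    lambertSeries q b = b * q / (1 - b * q) + lambertSeries q (b * q) := by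
  rw [lambertSeries, (summable_lambertSeries_term hq b).tsum_eq_zero_add, lambertSeries,
    zero_add, pow_one]
  congr 1
  exact tsum_congr fun n => by ring

theorem tendsto_eulerSeries_mul_pow (hq : ‖q‖ < 1) (a : 𝕜) :
    Tendsto (fun N => eulerSeries q (a * q ^ N)) atTop (𝓝 1) := by
  have h := tendsto_tsum_mul_pow_mul_pow hq (summable_norm_eulerCoeff_mul_pow hq ‖a‖)
  rw [eulerCoeff_zero] at h
  exact h

theorem tendsto_eulerSeriesTheta_mul_pow (hq : ‖q‖ < 1) (a : 𝕜) :
    Tendsto (fun N => eulerSeriesTheta q (a * q ^ N)) atTop (𝓝 0) := by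
  have h := tendsto_tsum_mul_pow_mul_pow hq
    (summable_norm_natCast_mul_eulerCoeff_mul_pow hq (norm_nonneg a))
  rw [Nat.cast_zero, zero_mul] at h
  exact h

theorem eulerSeries_eq_tprod (hq : ‖q‖ < 1) (a : 𝕜) :
    eulerSeries q a = ∏' n, (1 - a * q ^ (n + 1)) := by
  simpa using eq_tprod_mul_of_eq_mul_succ (f := fun N => eulerSeries q (a * q ^ N))
    (fun N => by rw [eulerSeries_eq_one_sub_mul hq, mul_assoc, ← pow_succ])
    (multipliable_one_sub_mul_pow_succ hq a) (tendsto_eulerSeries_mul_pow hq a)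

theorem lambertSeries_mul_eulerSeries_add_eulerSeriesTheta (hq : ‖q‖ < 1) {a : 𝕜}
    (ha : ∀ n, a * q ^ (n + 1) ≠ 1) :
    lambertSeries q a * eulerSeries q a + eulerSeriesTheta q a = 0 := by
  set E : 𝕜 → 𝕜 := fun b => lambertSeries q b * eulerSeries q b + eulerSeriesTheta q b
  have hE : ∀ b, 1 - b * q ≠ 0 → E b = (1 - b * q) * E (b * q) := by
    intro b hb
    simp only [E]
    rw [lambertSeries_eq_div_add hq, eulerSeries_eq_one_sub_mul hq,
      eulerSeriesTheta_eq_one_sub_mul_sub hq]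
    field_simp
    ring
  have hlim : Tendsto (fun N => E (a * q ^ N)) atTop (𝓝 0) := by
    simpa using ((tendsto_lambertSeries_mul_pow a).mul (tendsto_eulerSeries_mul_pow hq a)).add
      (tendsto_eulerSeriesTheta_mul_pow hq a)
  simpa using eq_tprod_mul_of_eq_mul_succ (f := fun N => E (a * q ^ N))
    (fun N => by
      rw [hE _ (by rw [mul_assoc, ← pow_succ]; exact sub_ne_zero.2 (ha N).symm), mul_assoc,
        ← pow_succ])
    (multipliable_one_sub_mul_pow_succ hq a) hlim

end QSeries

theorem stmt_11 (a q : ℂ) (hq : ‖q‖ < 1)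
    (ha : ∀ n : ℕ, 1 ≤ n → a * q ^ n ≠ 1) :
    ∑' n : ℕ, a * q ^ (n + 1) / (1 - a * q ^ (n + 1))
      = (-1) / (∏' j : ℕ, (1 - a * q ^ (j + 1)))
        * ∑' n : ℕ, (n + 1 : ℂ) * (-a) ^ (n + 1) * q ^ ((n + 1) * (n + 2) / 2)
            / ∏ j ∈ Finset.range (n + 1), (1 - q ^ (j + 1)) := by
  have ha' : ∀ n, a * q ^ (n + 1) ≠ 1 := fun n => ha (n + 1) n.succ_pos
  have hT : eulerSeriesTheta q a = ∑' n : ℕ, (n + 1 : ℂ) * (-a) ^ (n + 1)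
      * q ^ ((n + 1) * (n + 2) / 2) / ∏ j ∈ Finset.range (n + 1), (1 - q ^ (j + 1)) := by
    rw [eulerSeriesTheta, (summable_natCast_mul_eulerCoeff_mul_pow hq a).tsum_eq_zero_add]
    simp only [CharP.cast_eq_zero, zero_mul, zero_add]
    exact tsum_congr fun n => by rw [eulerCoeff, neg_pow]; push_cast; ring
  have hP := tprod_one_sub_mul_pow_succ_ne_zero hq ha'
  have key := lambertSeries_mul_eulerSeries_add_eulerSeriesTheta hq ha'
  rw [eulerSeries_eq_tprod hq, hT] at key
  change lambertSeries q a = _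
  field_simp
  linear_combination key
end
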